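/- Let n ≥ 1 and d ≥ 1 be natural numbers, and let M be an n × n matrix with nonnegative integer entries such that every row sum of M equals d and every column sum of M equals d. Then there exist permutations σ₁, …, σ_d of {1, …, n} such that for all indices i, j, the entry M(i,j) equals the number of k ∈ {1, …, d} with σ_k(i) = j; in other words, M is the sum of the d permutation matrices associated to σ₁, …, σ_d. -/

import Mathlib

/-!
A nonnegative integer matrix whose row and column sums all equal `d > 0` satisfies Hall's
condition on its support, so some permutation matrix lies below it; subtracting it leaves row
and column sums `d - 1`, and induction on `d` writes the matrix as a sum of `d` permutation
matrices.
-/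

open Finset Function Matrix

variable {ι κ : Type*}

/-- The rows in `A` carry mass at least `#A * d`, all of it in the columns of their joint support,
which carry mass at most `d` each: this is Hall's condition for the support of `M`. -/
theorem Matrix.exists_injective_forall_ne_zero [Fintype ι] [Fintype κ] {d : ℕ} (hd : 0 < d)
    (M : Matrix ι κ ℕ) (hrow : ∀ i, d ≤ ∑ j, M i j) (hcol : ∀ j, ∑ i, M i j ≤ d) :
    ∃ f : ι → κ, Injective f ∧ ∀ i, M i (f i) ≠ 0 := by
  classical
  let supp (i : ι) : Finset κ := {j | M i j ≠ 0}
  have hall (A : Finset ι) : #A ≤ #(A.biUnion supp) := by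
    have hsupp (i : ι) : ∑ j ∈ supp i, M i j = ∑ j, M i j :=
      sum_subset (subset_univ _) fun j _ hj => by simpa [supp] using hj
    refine Nat.le_of_mul_le_mul_right ?_ hd
    calc #A * d ≤ ∑ i ∈ A, ∑ j ∈ supp i, M i j := by
          rw [card_eq_sum_ones, sum_mul]
          exact sum_le_sum fun i _ => by simpa [hsupp] using hrow i
      _ ≤ ∑ i ∈ A, ∑ j ∈ A.biUnion supp, M i j :=
          sum_le_sum fun i hi => sum_le_sum_of_subset (subset_biUnion_of_mem supp hi)
      _ ≤ ∑ i, ∑ j ∈ A.biUnion supp, M i j := sum_le_sum_of_subset (subset_univ A)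
      _ = ∑ j ∈ A.biUnion supp, ∑ i, M i j := sum_comm
      _ ≤ #(A.biUnion supp) * d := by
          rw [card_eq_sum_ones, sum_mul]
          exact sum_le_sum fun j _ => by simpa using hcol j
  obtain ⟨f, hf, hfM⟩ := (all_card_le_biUnion_card_iff_exists_injective supp).1 hall
  exact ⟨f, hf, fun i => by simpa [supp] using hfM i⟩

theorem Matrix.exists_perm_forall_ne_zero [Fintype ι] {d : ℕ} (hd : 0 < d) (M : Matrix ι ι ℕ)
    (hrow : ∀ i, d ≤ ∑ j, M i j) (hcol : ∀ j, ∑ i, M i j ≤ d) :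
    ∃ σ : Equiv.Perm ι, ∀ i, M i (σ i) ≠ 0 := by
  obtain ⟨f, hf, hfM⟩ := exists_injective_forall_ne_zero hd M hrow hcol
  exact ⟨Equiv.ofBijective f (Finite.injective_iff_bijective.1 hf), hfM⟩

theorem Matrix.permMatrix_le_of_ne_zero [DecidableEq ι] {σ : Equiv.Perm ι} {M : Matrix ι ι ℕ}
    (hσ : ∀ i, M i (σ i) ≠ 0) (i j : ι) : σ.permMatrix ℕ i j ≤ M i j := by
  by_cases h : σ i = j
  · subst h
    simpa [PEquiv.toMatrix_apply, Nat.one_le_iff_ne_zero] using hσ i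
  · simp [PEquiv.toMatrix_apply, h]

theorem Matrix.exists_eq_sum_permMatrix [Fintype ι] [DecidableEq ι] (d : ℕ) (M : Matrix ι ι ℕ)
    (hrow : ∀ i, ∑ j, M i j = d) (hcol : ∀ j, ∑ i, M i j = d) :
    ∃ σ : Fin d → Equiv.Perm ι, M = ∑ k, (σ k).permMatrix ℕ := by
  induction d generalizing M with
  | zero =>
    refine ⟨Fin.elim0, ?_⟩
    ext i j
    simpa using sum_eq_zero_iff.1 (hrow i) j (mem_univ j)
  | succ d ih =>
    obtain ⟨σ, hσ⟩ := exists_perm_forall_ne_zero d.succ_pos M (hrow · |>.ge) (hcol · |>.le)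
    set P := σ.permMatrix ℕ
    have hPM (i j : ι) : P i j ≤ M i j := permMatrix_le_of_ne_zero hσ i j
    have hrowP (i : ι) : ∑ j, P i j = 1 :=
      sum_row_of_mem_rowStochastic permMatrix_mem_rowStochastic i
    have hcolP (j : ι) : ∑ i, P i j = 1 :=
      sum_col_of_mem_colStochastic permMatrix_mem_colStochastic j
    obtain ⟨τ, hτ⟩ := ih (M - P)
      (fun i => by simp only [sub_apply, sum_tsub_distrib _ fun j _ => hPM i j, hrow, hrowP]; rfl)
      (fun j => by simp only [sub_apply, sum_tsub_distrib _ fun i _ => hPM i j, hcol, hcolP]; rfl)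
    refine ⟨Fin.cons σ τ, ?_⟩
    ext i j
    simp only [Fin.sum_univ_succ, Fin.cons_zero, Fin.cons_succ, ← hτ, add_apply, sub_apply]
    exact (add_tsub_cancel_of_le (hPM i j)).symm

theorem Matrix.sum_permMatrix_apply [DecidableEq ι] {α : Type*} (s : Finset α)
    (σ : α → Equiv.Perm ι) (i j : ι) :
    (∑ k ∈ s, (σ k).permMatrix ℕ) i j = #{k ∈ s | σ k i = j} := by
  simp [sum_apply, PEquiv.toMatrix_apply, Equiv.toPEquiv_apply]

theorem integer_birkhoff_von_neumann_general (n d : ℕ)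
    (M : Matrix (Fin n) (Fin n) ℕ)
    (hrow : ∀ i, ∑ j, M i j = d) (hcol : ∀ j, ∑ i, M i j = d) :
    ∃ σ : Fin d → Equiv.Perm (Fin n),
      ∀ i j, M i j = (Finset.univ.filter fun k : Fin d => σ k i = j).card := by
  obtain ⟨σ, hσ⟩ := M.exists_eq_sum_permMatrix d hrow hcol
  exact ⟨σ, fun i j => by rw [hσ, sum_permMatrix_apply]⟩

/-- **Integer Birkhoff–von Neumann decomposition.**
If `M` is an `n × n` matrix of nonnegative integers in which every row sum and every
column sum equals `d` (with `n ≥ 1`, `d ≥ 1`), then `M` is the sum of `d` permutation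
matrices: there are permutations `σ 0, …, σ (d-1)` of `Fin n` such that `M i j` equals
the number of `k` with `σ k i = j`. -/
theorem integer_birkhoff_von_neumann (n d : ℕ) (hn : 1 ≤ n) (hd : 1 ≤ d)
    (M : Matrix (Fin n) (Fin n) ℕ)
    (hrow : ∀ i, ∑ j, M i j = d) (hcol : ∀ j, ∑ i, M i j = d) :
    ∃ σ : Fin d → Equiv.Perm (Fin n),
      ∀ i j, M i j = (Finset.univ.filter fun k : Fin d => σ k i = j).card :=
  integer_birkhoff_von_neumann_general n d M hrow hcol
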